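/- arXiv:2401.06623 — 2 statements merged into one kernel-verified Lean document; each statement's English description precedes it below -/
import Mathlib

section
/- Let a ∈ (−1,1). Let w be a continuous function on the closed half-space {(x,y) : y ≥ 0} which is C² on ℝ₊^{n+1} and satisfies y·Δw(z) + a·∂_y w(z) = 0 for every z ∈ ℝ₊^{n+1} (equivalently, div(y^a ∇w) = 0), together with w(x,0) = 0 for every x ∈ ℝⁿ. Suppose that for some constants C > 0 and d ∈ [0, 1−a) one has |w(z)| ≤ C(1 + |z|^d) for every z. Then w is identically zero. -/
open MeasureTheory Filter Set Topology
open scoped ENNReal NNReal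

noncomputable section

/-- The Euclidean space `ℝ^{n+1}`. -/
abbrev E (n : ℕ) := EuclideanSpace ℝ (Fin (n + 1))

/-- The last coordinate `y` of a point `z = (x, y) ∈ ℝ^{n+1}`. -/
def ycoord {n : ℕ} (z : E n) : ℝ := z (Fin.last n)

/-- The open upper half-space `ℝ₊^{n+1}`. -/
def upperHalf (n : ℕ) : Set (E n) := {z | 0 < ycoord z}

/-- The open upper half-ball `B_r⁺`. -/
def Bplus (n : ℕ) (r : ℝ) : Set (E n) := {z | 0 < ycoord z ∧ ‖z‖ < r}

/-- The upper hemisphere `(∂B_r)⁺`. -/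
def sphPlus (n : ℕ) (r : ℝ) : Set (E n) := {z | 0 < ycoord z ∧ ‖z‖ = r}

/-- The point `(x, y) ∈ ℝ^{n+1}` built from `x ∈ ℝⁿ` and `y ∈ ℝ`. -/
def pt {n : ℕ} (x : EuclideanSpace ℝ (Fin n)) (y : ℝ) : E n :=
  (EuclideanSpace.equiv (Fin (n + 1)) ℝ).symm (Fin.snoc (fun i => x i) y)

/-- The unit vector `e_{n+1}` in the `y`-direction. -/
def eY (n : ℕ) : E n := EuclideanSpace.single (Fin.last n) (1 : ℝ)

/-- The partial derivative `∂_y u` in the `y`-direction. -/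
def partialY {n : ℕ} (u : E n → ℝ) (z : E n) : ℝ := fderiv ℝ u z (eY n)

/-- The Euclidean Laplacian `Δu = ∑ ∂²u/∂z_i²`. -/
def lap {n : ℕ} (u : E n → ℝ) (z : E n) : ℝ :=
  ∑ i : Fin (n + 1),
    fderiv ℝ (fun w => fderiv ℝ u w (EuclideanSpace.single i (1 : ℝ))) z
      (EuclideanSpace.single i (1 : ℝ))

/-- A C¹ function with compact support contained in `{z : ‖z‖ ≤ r, y > 0}`. -/
def IsTestFn (n : ℕ) (r : ℝ) (φ : E n → ℝ) : Prop :=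
  ContDiff ℝ 1 φ ∧ tsupport φ ⊆ {z : E n | ‖z‖ ≤ r ∧ 0 < ycoord z}

/-- The `y^a`-weighted Sobolev energy `∫_{B_r⁺} (|∇u|² + u²) y^a dz`. -/
def wInt (n : ℕ) (a : ℝ) (u : E n → ℝ) (r : ℝ) : ℝ≥0∞ :=
  ∫⁻ z in Bplus n r, ENNReal.ofReal ((‖gradient u z‖ ^ 2 + (u z) ^ 2) * (ycoord z) ^ a)

/-- Membership in `H^{1,a}(ℝ₊^{n+1})`: locally finite weighted Sobolev norm. -/
def memH1 (n : ℕ) (a : ℝ) (u : E n → ℝ) : Prop := ∀ r > 0, wInt n a u r < ⊤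

/-- Membership in `H̃^{1,a}(ℝ₊^{n+1})`: finite local weighted norm together with
approximability by C¹ functions compactly supported away from the boundary. -/
def memH1T (n : ℕ) (a : ℝ) (u : E n → ℝ) : Prop :=
  memH1 n a u ∧ ∀ r > 0, ∃ φ : ℕ → E n → ℝ, (∀ k, IsTestFn n r (φ k)) ∧
    Tendsto (fun k => wInt n a (fun z => u z - φ k z) r) atTop (nhds 0)


/-!
Comparison with a barrier. Fix `R ≥ |z₀|` and let `c = C(1 + R^d)`, so that `w ≤ c` on the upper
hemisphere of radius `R`. With `K = (n+2)/(1+a)`, the function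
`v = w + c (K ((y/R)² - (y/R)^{1-a}) - (|z|/R)²)` satisfies `yΔv + a∂_y v = 2c(1-a) y / R² > 0`
on the half ball, because `y^{1-a}` solves the equation; hence `v` has no interior maximum. It is
`≤ 0` on the flat part of the boundary and on the hemisphere, so `v ≤ 0`, i.e.
`w(z₀) ≤ c (K (|z₀|/R)^{1-a} + (|z₀|/R)²)`. The right side tends to `0` as `R → ∞` since
`d < 1 - a < 2`; the same bound for `-w` gives `w = 0`.
-/

theorem IsLocalMax.deriv_deriv_nonpos {f : ℝ → ℝ} {t : ℝ} (hmax : IsLocalMax f t)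
    (hc : ContinuousAt f t) : deriv (deriv f) t ≤ 0 := by
  -- if `f'' t > 0`, the second derivative test makes `t` a local minimum too, so `f` is
  -- locally constant and `f'' t = 0`
  by_contra! hpos
  have hconst : f =ᶠ[𝓝 t] fun _ => f t :=
    (hmax.and (isLocalMin_of_deriv_deriv_pos hpos hmax.deriv_eq_zero hc)).mono
      fun s hs => le_antisymm hs.1 hs.2
  have hderiv : deriv f =ᶠ[𝓝 t] fun _ => 0 :=
    hconst.eventuallyEq_nhds.mono fun s hs => by rw [hs.deriv_eq, deriv_const]
  simp [hderiv.deriv_eq] at hpos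

section SecondDerivative

variable {F : Type*} [NormedAddCommGroup F] [NormedSpace ℝ F] {v : F → ℝ} {z : F}

theorem ContDiffAt.differentiableAt_fderiv_apply (hv : ContDiffAt ℝ 2 v z) (e : F) :
    DifferentiableAt ℝ (fun x => fderiv ℝ v x e) z :=
  ((hv.fderiv_right (m := 1) (by norm_num)).differentiableAt one_ne_zero).clm_apply
    (differentiableAt_const e)

theorem IsLocalMax.fderiv_fderiv_apply_nonpos (hmax : IsLocalMax v z) (hv : ContDiffAt ℝ 2 v z)
    (e : F) : fderiv ℝ (fun x => fderiv ℝ v x e) z e ≤ 0 := by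
  have hline : ∀ t : ℝ, HasDerivAt (fun t : ℝ => z + t • e) e t := fun t => by
    simpa using ((hasDerivAt_id t).smul_const e).const_add z
  set line : ℝ → F := fun t => z + t • e
  have hline0 : line 0 = z := by simp [line]
  have hcont : ContinuousAt line 0 := (hline 0).continuousAt
  have hderiv : deriv (v ∘ line) =ᶠ[𝓝 0] fun t => fderiv ℝ v (line t) e := by
    have hdiff : ∀ᶠ t in 𝓝 0, DifferentiableAt ℝ v (line t) :=
      hcont.eventually (hline0 ▸ (hv.eventually (by simp)).mono
        fun x hx => hx.differentiableAt (by norm_num))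
    exact hdiff.mono fun t ht => (ht.hasFDerivAt.comp_hasDerivAt t (hline t)).deriv
  have hsecond : deriv (deriv (v ∘ line)) 0 = fderiv ℝ (fun x => fderiv ℝ v x e) z e := by
    rw [hderiv.deriv_eq]
    have h := (hline0 ▸ hv.differentiableAt_fderiv_apply e).hasFDerivAt.comp_hasDerivAt 0 (hline 0)
    rw [hline0] at h
    exact h.deriv
  rw [← hsecond]
  exact (hline0 ▸ hmax).comp_continuous hcont |>.deriv_deriv_nonpos
    ((hline0 ▸ hv.continuousAt).comp hcont)

end SecondDerivative

theorem IsCompact.le_of_not_isLocalMax {X : Type*} [TopologicalSpace X] {K U : Set X}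
    {v : X → ℝ} {M : ℝ} (hK : IsCompact K) (hU : IsOpen U) (hUK : U ⊆ K)
    (hv : ContinuousOn v K) (hmax : ∀ z ∈ U, ¬ IsLocalMax v z)
    (hbd : ∀ z ∈ K \ U, v z ≤ M) : ∀ z ∈ K, v z ≤ M := by
  intro z hz
  obtain ⟨zm, hzmK, hzm⟩ := hK.exists_isMaxOn ⟨z, hz⟩ hv
  have hzmU : zm ∉ U := fun hzmU =>
    hmax zm hzmU (hzm.isLocalMax (mem_of_superset (hU.mem_nhds hzmU) hUK))
  exact (hzm hz).trans (hbd zm ⟨hzmK, hzmU⟩)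

section HalfSpace

variable {n : ℕ}

def ycoordL (n : ℕ) : E n →L[ℝ] ℝ := EuclideanSpace.proj (Fin.last n)

theorem ycoordL_apply (z : E n) : ycoordL n z = ycoord z := rfl

@[fun_prop]
theorem contDiff_ycoord {k : WithTop ℕ∞} : ContDiff ℝ k (ycoord : E n → ℝ) := (ycoordL n).contDiff

@[fun_prop]
theorem continuous_ycoord : Continuous (ycoord : E n → ℝ) := (ycoordL n).continuous

theorem ycoord_le_norm (z : E n) : ycoord z ≤ ‖z‖ :=
  (le_abs_self _).trans (PiLp.norm_apply_le z (Fin.last n))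

theorem ycoord_single (i : Fin (n + 1)) :
    ycoord (EuclideanSpace.single i (1 : ℝ) : E n) = if Fin.last n = i then 1 else 0 := by
  simp [ycoord]

theorem lap_nonpos_of_isLocalMax {v : E n → ℝ} {z : E n} (hmax : IsLocalMax v z)
    (hv : ContDiffAt ℝ 2 v z) : lap v z ≤ 0 :=
  Finset.sum_nonpos fun _ _ => hmax.fderiv_fderiv_apply_nonpos hv _

theorem lap_add {u g : E n → ℝ} {z : E n} (hu : ContDiffAt ℝ 2 u z) (hg : ContDiffAt ℝ 2 g z) :
    lap (fun x => u x + g x) z = lap u z + lap g z := by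
  unfold lap
  rw [← Finset.sum_add_distrib]
  refine Finset.sum_congr rfl fun i _ => ?_
  set e : E n := EuclideanSpace.single i 1
  have hfderiv : (fun x => fderiv ℝ (fun y => u y + g y) x e)
      =ᶠ[𝓝 z] fun x => fderiv ℝ u x e + fderiv ℝ g x e := by
    filter_upwards [hu.eventually (by simp), hg.eventually (by simp)] with x hux hgx
    rw [fderiv_fun_add (hux.differentiableAt (by norm_num)) (hgx.differentiableAt (by norm_num))]
    rfl
  rw [hfderiv.fderiv_eq, fderiv_fun_add (hu.differentiableAt_fderiv_apply e)
    (hg.differentiableAt_fderiv_apply e)]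
  rfl

theorem partialY_add {u g : E n → ℝ} {z : E n} (hu : DifferentiableAt ℝ u z)
    (hg : DifferentiableAt ℝ g z) :
    partialY (fun x => u x + g x) z = partialY u z + partialY g z := by
  simp only [partialY, fderiv_fun_add hu hg, add_apply]

theorem lap_neg (u : E n → ℝ) (z : E n) : lap (fun x => -u x) z = -lap u z := by
  simp only [lap, fderiv_fun_neg, neg_apply, Finset.sum_neg_distrib]

theorem partialY_neg (u : E n → ℝ) (z : E n) : partialY (fun x => -u x) z = -partialY u z := by
  simp only [partialY, fderiv_fun_neg, neg_apply]

theorem hasFDerivAt_comp_ycoord {f : ℝ → ℝ} {f' : ℝ} {z : E n}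
    (hf : HasDerivAt f f' (ycoord z)) :
    HasFDerivAt (fun x => f (ycoord x)) (f' • ycoordL n) z :=
  hf.comp_hasFDerivAt z (ycoordL n).hasFDerivAt

theorem partialY_comp_ycoord {f : ℝ → ℝ} {f' : ℝ} {z : E n}
    (hf : HasDerivAt f f' (ycoord z)) :
    partialY (fun x => f (ycoord x)) z = f' := by
  rw [partialY, (hasFDerivAt_comp_ycoord hf).fderiv]
  simp [eY, ycoordL_apply, ycoord_single]

theorem lap_comp_ycoord {f f' : ℝ → ℝ} {f'' : ℝ} {z : E n}
    (hf : ∀ᶠ t in 𝓝 (ycoord z), HasDerivAt f (f' t) t) (hf' : HasDerivAt f' f'' (ycoord z)) :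
    lap (fun x => f (ycoord x)) z = f'' := by
  have hterm : ∀ i : Fin (n + 1), fderiv ℝ (fun x => fderiv ℝ (fun x => f (ycoord x)) x
      (EuclideanSpace.single i 1)) z (EuclideanSpace.single i 1)
        = f'' * ycoord (EuclideanSpace.single i 1 : E n) ^ 2 := by
    intro i
    have hfderiv : (fun x => fderiv ℝ (fun x => f (ycoord x)) x (EuclideanSpace.single i 1))
        =ᶠ[𝓝 z] fun x => f' (ycoord x) * ycoord (EuclideanSpace.single i 1 : E n) :=
      (continuous_ycoord.continuousAt.eventually hf).mono fun x hx => by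
        simp [(hasFDerivAt_comp_ycoord hx).fderiv, ycoordL_apply]
    rw [hfderiv.fderiv_eq, ((hasFDerivAt_comp_ycoord hf').mul_const _).fderiv]
    simp [ycoordL_apply]
    ring
  simp only [lap, hterm, ycoord_single]
  simp

theorem hasFDerivAt_const_mul_norm_sq (s : ℝ) (x : E n) :
    HasFDerivAt (fun x : E n => s * ‖x‖ ^ 2) (s • 2 • innerSL ℝ x) x :=
  (hasStrictFDerivAt_norm_sq x).hasFDerivAt.const_mul s

theorem fderiv_const_mul_norm_sq_apply (s : ℝ) (x e : E n) :
    fderiv ℝ (fun x : E n => s * ‖x‖ ^ 2) x e = 2 * s * inner ℝ x e := by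
  simp [(hasFDerivAt_const_mul_norm_sq s x).fderiv]
  ring

theorem partialY_const_mul_norm_sq (s : ℝ) (z : E n) :
    partialY (fun x : E n => s * ‖x‖ ^ 2) z = 2 * s * ycoord z := by
  simp [partialY, fderiv_const_mul_norm_sq_apply, eY, EuclideanSpace.inner_single_right, ycoord]

theorem lap_const_mul_norm_sq (s : ℝ) (z : E n) :
    lap (fun x : E n => s * ‖x‖ ^ 2) z = 2 * s * (n + 1) := by
  have hterm : ∀ e : E n,
      fderiv ℝ (fun x => fderiv ℝ (fun x : E n => s * ‖x‖ ^ 2) x e) z e = 2 * s * ‖e‖ ^ 2 := by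
    intro e
    simp only [fderiv_const_mul_norm_sq_apply]
    have hinner : HasFDerivAt (fun x : E n => inner ℝ x e) ((innerSL ℝ).flip e) z :=
      ((innerSL ℝ).flip e).hasFDerivAt
    rw [(hinner.const_mul (2 * s)).fderiv]
    simp only [smul_apply, ContinuousLinearMap.flip_apply, smul_eq_mul]
    rw [innerSL_apply_apply, real_inner_self_eq_norm_sq]
  simp [lap, hterm]
  ring

/-- `y^{1-a} Δ_a u`. -/
def degOp (a : ℝ) (u : E n → ℝ) (z : E n) : ℝ := ycoord z * lap u z + a * partialY u z

theorem degOp_add {a : ℝ} {u g : E n → ℝ} {z : E n} (hu : ContDiffAt ℝ 2 u z)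
    (hg : ContDiffAt ℝ 2 g z) :
    degOp a (fun x => u x + g x) z = degOp a u z + degOp a g z := by
  rw [degOp, lap_add hu hg, partialY_add (hu.differentiableAt (by norm_num))
    (hg.differentiableAt (by norm_num)), degOp, degOp]
  ring

theorem degOp_neg (a : ℝ) (u : E n → ℝ) (z : E n) : degOp a (fun x => -u x) z = -degOp a u z := by
  rw [degOp, lap_neg, partialY_neg, degOp]
  ring

theorem not_isLocalMax_of_degOp_pos {a : ℝ} {v : E n → ℝ} {z : E n} (hz : 0 < ycoord z)
    (hv : ContDiffAt ℝ 2 v z) (hpos : 0 < degOp a v z) : ¬ IsLocalMax v z := by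
  intro hmax
  have hlap : lap v z ≤ 0 := lap_nonpos_of_isLocalMax hmax hv
  have hpartialY : partialY v z = 0 := by simp [partialY, hmax.fderiv_eq_zero]
  rw [degOp, hpartialY] at hpos
  nlinarith

def barrierProfile (a p q t : ℝ) : ℝ := p * t ^ 2 - q * t ^ (1 - a)

def barrier (a p q s : ℝ) (z : E n) : ℝ := barrierProfile a p q (ycoord z) + s * ‖z‖ ^ 2

theorem hasDerivAt_barrierProfile (a p q : ℝ) {t : ℝ} (ht : t ≠ 0) :
    HasDerivAt (barrierProfile a p q) (2 * p * t - q * (1 - a) * t ^ (-a)) t := by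
  have h := ((hasDerivAt_pow 2 t).const_mul p).fun_sub
    ((Real.hasDerivAt_rpow_const (p := 1 - a) (Or.inl ht)).const_mul q)
  refine h.congr_deriv ?_
  rw [show 1 - a - 1 = -a by ring]
  push_cast
  ring

theorem hasDerivAt_deriv_barrierProfile (a p q : ℝ) {t : ℝ} (ht : t ≠ 0) :
    HasDerivAt (fun t => 2 * p * t - q * (1 - a) * t ^ (-a))
      (2 * p + q * (1 - a) * a * t ^ (-a - 1)) t := by
  have h := ((hasDerivAt_id t).const_mul (2 * p)).fun_sub
    ((Real.hasDerivAt_rpow_const (p := -a) (Or.inl ht)).const_mul (q * (1 - a)))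
  refine h.congr_deriv ?_
  ring

theorem continuous_barrier {a : ℝ} (ha : a ≤ 1) (p q s : ℝ) :
    Continuous (barrier (n := n) a p q s) := by
  have hrpow : Continuous fun z : E n => ycoord z ^ (1 - a) :=
    continuous_ycoord.rpow_const fun _ => Or.inr (by linarith)
  unfold barrier barrierProfile
  fun_prop

theorem contDiffAt_barrierProfile (a p q : ℝ) {t : ℝ} (ht : t ≠ 0) :
    ContDiffAt ℝ 2 (barrierProfile a p q) t :=
  (contDiffAt_const.mul (contDiffAt_id.pow 2)).sub
    (contDiffAt_const.mul (Real.contDiffAt_rpow_const_of_ne ht))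

theorem contDiffAt_const_mul_norm_sq (s : ℝ) (z : E n) :
    ContDiffAt ℝ 2 (fun x : E n => s * ‖x‖ ^ 2) z :=
  contDiffAt_const.mul (contDiff_norm_sq ℝ).contDiffAt

theorem contDiffAt_barrier (a p q s : ℝ) {z : E n} (hz : 0 < ycoord z) :
    ContDiffAt ℝ 2 (barrier a p q s) z :=
  ((contDiffAt_barrierProfile a p q hz.ne').comp z contDiff_ycoord.contDiffAt).add
    (contDiffAt_const_mul_norm_sq s z)

theorem degOp_barrier (a p q s : ℝ) {z : E n} (hz : 0 < ycoord z) :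
    degOp a (barrier a p q s) z = 2 * ycoord z * (p * (1 + a) + s * (n + 1 + a)) := by
  have hprofile : ContDiffAt ℝ 2 (fun x => barrierProfile a p q (ycoord x)) z :=
    (contDiffAt_barrierProfile a p q hz.ne').comp z contDiff_ycoord.contDiffAt
  have hderiv : ∀ᶠ t in 𝓝 (ycoord z),
      HasDerivAt (barrierProfile a p q) (2 * p * t - q * (1 - a) * t ^ (-a)) t :=
    (eventually_ne_nhds hz.ne').mono fun t ht => hasDerivAt_barrierProfile a p q ht
  have hlap := lap_comp_ycoord hderiv (hasDerivAt_deriv_barrierProfile a p q hz.ne')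
  have hpartialY := partialY_comp_ycoord (hasDerivAt_barrierProfile a p q hz.ne')
  have hrpow : ycoord z ^ (-a) = ycoord z * ycoord z ^ (-a - 1) := by
    conv_lhs => rw [show -a = 1 + (-a - 1) by ring, Real.rpow_add hz, Real.rpow_one]
  unfold barrier
  rw [degOp_add hprofile (contDiffAt_const_mul_norm_sq s z), degOp, degOp,
    hlap, hpartialY, lap_const_mul_norm_sq, partialY_const_mul_norm_sq]
  linear_combination (-(a * q * (1 - a))) * hrpow

theorem le_of_degOp_pos_of_boundary_le {a R M : ℝ} {v : E n → ℝ}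
    (hv : ContinuousOn v {z | 0 ≤ ycoord z ∧ ‖z‖ ≤ R})
    (hsub : ∀ z ∈ Bplus n R, ContDiffAt ℝ 2 v z ∧ 0 < degOp a v z)
    (hbot : ∀ z : E n, ycoord z = 0 → v z ≤ M) (hsph : ∀ z ∈ sphPlus n R, v z ≤ M)
    {z : E n} (hz : 0 ≤ ycoord z) (hzR : ‖z‖ ≤ R) : v z ≤ M := by
  have hclosed : IsClosed {z : E n | 0 ≤ ycoord z ∧ ‖z‖ ≤ R} :=
    (isClosed_le continuous_const continuous_ycoord).inter
      (isClosed_le continuous_norm continuous_const)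
  have hcompact : IsCompact {z : E n | 0 ≤ ycoord z ∧ ‖z‖ ≤ R} :=
    (isCompact_closedBall 0 R).of_isClosed_subset hclosed fun x hx => by simpa using hx.2
  have hopen : IsOpen (Bplus n R) :=
    (isOpen_lt continuous_const continuous_ycoord).inter
      (isOpen_lt continuous_norm continuous_const)
  refine hcompact.le_of_not_isLocalMax hopen (fun x hx => ⟨hx.1.le, hx.2.le⟩) hv
    (fun x hx => not_isLocalMax_of_degOp_pos hx.1 (hsub x hx).1 (hsub x hx).2) ?_ z ⟨hz, hzR⟩
  rintro x ⟨⟨hx, hxR⟩, hxB⟩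
  rcases hx.eq_or_lt with hx0 | hxpos
  · exact hbot x hx0.symm
  · exact hsph x ⟨hxpos, hxR.eq_of_not_lt fun hlt => hxB ⟨hxpos, hlt⟩⟩

theorem le_of_degOp_eq_zero_of_le_on_sphPlus {a : ℝ} (ha : a ∈ Ioo (-1 : ℝ) 1) {w : E n → ℝ}
    (hcont : ContinuousOn w {z : E n | 0 ≤ ycoord z})
    (hC2 : ContDiffOn ℝ 2 w (upperHalf n)) (hpde : ∀ z ∈ upperHalf n, degOp a w z = 0)
    (hbdry : ∀ z : E n, ycoord z = 0 → w z = 0) {R c : ℝ} (hR : 0 < R) (hc : 0 < c)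
    (hsph : ∀ z ∈ sphPlus n R, w z ≤ c) {z : E n} (hz : 0 ≤ ycoord z) (hzR : ‖z‖ ≤ R) :
    w z ≤ c / R ^ (1 - a) * ((n + 2) / (1 + a) * ycoord z ^ (1 - a)) + c / R ^ 2 * ‖z‖ ^ 2 := by
  obtain ⟨ha₁, ha₂⟩ := ha
  set K : ℝ := (n + 2) / (1 + a)
  have hK : K * (1 + a) = n + 2 := div_mul_cancel₀ _ (by linarith)
  have hKpos : 0 < K := div_pos (by positivity) (by linarith)
  set G : E n → ℝ := barrier a (K * c / R ^ 2) (K * c / R ^ (1 - a)) (-c / R ^ 2)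
  have hbound : w z + G z ≤ 0 := by
    refine le_of_degOp_pos_of_boundary_le (a := a) (v := fun x => w x + G x)
      ((hcont.mono fun x hx => hx.1).add (continuous_barrier ha₂.le _ _ _).continuousOn)
      ?_ ?_ ?_ hz hzR
    · intro x hx
      have hw : ContDiffAt ℝ 2 w x :=
        hC2.contDiffAt ((isOpen_lt continuous_const continuous_ycoord).mem_nhds hx.1)
      refine ⟨hw.add (contDiffAt_barrier _ _ _ _ hx.1), ?_⟩
      have hcoeff : K * c / R ^ 2 * (1 + a) + -c / R ^ 2 * (n + 1 + a) = c / R ^ 2 * (1 - a) := by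
        linear_combination c / R ^ 2 * hK
      rw [degOp_add hw (contDiffAt_barrier _ _ _ _ hx.1), hpde x hx.1, degOp_barrier _ _ _ _ hx.1,
        hcoeff]
      have hy : 0 < ycoord x := hx.1
      have : 0 < 1 - a := by linarith
      positivity
    · intro x hx
      have hzero : (0 : ℝ) ^ (1 - a) = 0 := Real.zero_rpow (by linarith)
      simp only [G, barrier, barrierProfile, hbdry x hx, hx, hzero]
      have : 0 ≤ c / R ^ 2 * ‖x‖ ^ 2 := by positivity
      linear_combination this
    · intro x ⟨hy, hxR⟩
      have hyR : ycoord x ≤ R := hxR ▸ ycoord_le_norm x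
      have hratio : (ycoord x / R) ^ (2 : ℝ) ≤ (ycoord x / R) ^ (1 - a) :=
        Real.rpow_le_rpow_of_exponent_ge (div_pos hy hR) ((div_le_one hR).2 hyR) (by linarith)
      rw [Real.rpow_two, div_pow, Real.div_rpow hy.le hR.le] at hratio
      have hR2 : -c / R ^ 2 * R ^ 2 = -c := by field_simp
      simp only [G, barrier, barrierProfile, hxR, hR2]
      linear_combination hsph x ⟨hy, hxR⟩ + (K * c) * hratio
  simp only [G, barrier, barrierProfile] at hbound
  have : 0 ≤ K * c / R ^ 2 * ycoord z ^ 2 := by positivity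
  linear_combination hbound + this

theorem tendsto_one_add_rpow_div_rpow_atTop {d e : ℝ} (hde : d < e) (he : 0 < e) :
    Tendsto (fun R : ℝ => (1 + R ^ d) / R ^ e) atTop (𝓝 0) := by
  have h := (tendsto_rpow_neg_atTop he).add (tendsto_rpow_neg_atTop (sub_pos.2 hde))
  rw [add_zero] at h
  refine h.congr' ((eventually_gt_atTop 0).mono fun R hR => ?_)
  rw [neg_sub, Real.rpow_sub hR, Real.rpow_neg hR.le]
  field_simp

theorem nonpos_of_degOp_eq_zero_of_le_growth {a : ℝ} (ha : a ∈ Ioo (-1 : ℝ) 1) {w : E n → ℝ}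
    (hcont : ContinuousOn w {z : E n | 0 ≤ ycoord z})
    (hC2 : ContDiffOn ℝ 2 w (upperHalf n)) (hpde : ∀ z ∈ upperHalf n, degOp a w z = 0)
    (hbdry : ∀ z : E n, ycoord z = 0 → w z = 0) {C d : ℝ} (hC : 0 < C) (hd : d < 1 - a)
    (hgrowth : ∀ z : E n, 0 ≤ ycoord z → w z ≤ C * (1 + ‖z‖ ^ d))
    {z : E n} (hz : 0 ≤ ycoord z) : w z ≤ 0 := by
  have hb : 0 < 1 - a := by linarith [ha.2]
  have hlim : Tendsto (fun R : ℝ => C * ((1 + R ^ d) / R ^ (1 - a)) *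
      ((n + 2) / (1 + a) * ycoord z ^ (1 - a)) + C * ((1 + R ^ d) / R ^ 2) * ‖z‖ ^ 2)
      atTop (𝓝 0) := by
    have h2 : Tendsto (fun R : ℝ => (1 + R ^ d) / R ^ 2) atTop (𝓝 0) := by
      simpa using tendsto_one_add_rpow_div_rpow_atTop (e := 2) (by linarith [ha.1]) two_pos
    simpa using ((tendsto_one_add_rpow_div_rpow_atTop hd hb).const_mul C).mul_const
      ((n + 2) / (1 + a) * ycoord z ^ (1 - a)) |>.add ((h2.const_mul C).mul_const (‖z‖ ^ 2))
  refine ge_of_tendsto hlim ((eventually_ge_atTop (max ‖z‖ 1)).mono fun R hRmax => ?_)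
  have hR : 0 < R := lt_of_lt_of_le one_pos (le_of_max_le_right hRmax)
  have hc : 0 < C * (1 + R ^ d) := by positivity
  have hsph : ∀ x ∈ sphPlus n R, w x ≤ C * (1 + R ^ d) := fun x ⟨hx, hxR⟩ =>
    hxR ▸ hgrowth x hx.le
  calc w z ≤ _ := le_of_degOp_eq_zero_of_le_on_sphPlus ha hcont hC2 hpde hbdry hR hc hsph hz
        (le_of_max_le_left hRmax)
    _ = _ := by ring

end HalfSpace

theorem liouville_degenerate_sublinear_growth_general
    (n : ℕ) (a : ℝ) (ha : a ∈ Set.Ioo (-1 : ℝ) 1)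
    (w : E n → ℝ)
    (hcont : ContinuousOn w {z : E n | 0 ≤ ycoord z})
    (hC2 : ContDiffOn ℝ 2 w (upperHalf n))
    (hpde : ∀ z ∈ upperHalf n, ycoord z * lap w z + a * partialY w z = 0)
    (hbdry : ∀ z : E n, ycoord z = 0 → w z = 0)
    (C : ℝ) (hC : 0 < C) (d : ℝ) (hd : d ∈ Set.Ico 0 (1 - a))
    (hgrowth : ∀ z : E n, 0 ≤ ycoord z → |w z| ≤ C * (1 + ‖z‖ ^ d)) :
    ∀ z : E n, 0 ≤ ycoord z → w z = 0 := by
  intro z hz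
  have hle : w z ≤ 0 := nonpos_of_degOp_eq_zero_of_le_growth ha hcont hC2 hpde hbdry hC hd.2
    (fun x hx => (le_abs_self _).trans (hgrowth x hx)) hz
  have hge : -w z ≤ 0 := nonpos_of_degOp_eq_zero_of_le_growth (w := fun x => -w x) ha
    hcont.neg hC2.neg (fun x hx => by rw [degOp_neg, neg_eq_zero]; exact hpde x hx)
    (fun x hx => by rw [hbdry x hx, neg_zero]) hC hd.2
    (fun x hx => (neg_le_abs _).trans (hgrowth x hx)) hz
  linarith

/-- Liouville-type theorem for `Δ_a w = 0` with zero boundary data and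
growth `|w(z)| ≤ C(1 + |z|^d)` for some `d ∈ [0, 1-a)`, where `a ∈ (-1,1)`. -/
theorem liouville_degenerate_sublinear_growth
    (n : ℕ) (hn : 1 ≤ n) (a : ℝ) (ha : a ∈ Set.Ioo (-1 : ℝ) 1)
    (w : E n → ℝ)
    (hcont : ContinuousOn w {z : E n | 0 ≤ ycoord z})
    (hC2 : ContDiffOn ℝ 2 w (upperHalf n))
    (hpde : ∀ z ∈ upperHalf n, ycoord z * lap w z + a * partialY w z = 0)
    (hbdry : ∀ z : E n, ycoord z = 0 → w z = 0)
    (C : ℝ) (hC : 0 < C) (d : ℝ) (hd : d ∈ Set.Ico 0 (1 - a))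
    (hgrowth : ∀ z : E n, 0 ≤ ycoord z → |w z| ≤ C * (1 + ‖z‖ ^ d)) :
    ∀ z : E n, 0 ≤ ycoord z → w z = 0 :=
  liouville_degenerate_sublinear_growth_general n a ha w hcont hC2 hpde hbdry C hC d hd hgrowth
end
end

section
/- Let n ≥ 1 and let s be a real number with n/2 < s < n. Let v be a positive C¹ function on ℝ₊^{n+1}, set ρ := v^{1/(n−s)}, and assume y·|∇ρ(z)| ≤ ρ(z) for every z ∈ ℝ₊^{n+1} (this is the condition 1 − |∇*_s ρ|²_{g*_s} ≥ 0 for the adapted metric). Define w(x,y) := 1 − v(x,y)/y^{n−s} and assume lim_{y→0⁺} w(x,y) = 0 for every x ∈ ℝⁿ. Then ∂_y w ≥ 0 everywhere on ℝ₊^{n+1}, and 0 ≤ w(z) < 1 for every z ∈ ℝ₊^{n+1}. -/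
open MeasureTheory Filter Set Topology
open scoped ENNReal NNReal

noncomputable section

/-!
With `N = n - s > 0` and `v = ρ^N`, the bound `y |∇ρ| ≤ ρ` gives `y ∂_y v ≤ N v`, hence
`∂_y w = y^{-N-1} (N v - y ∂_y v) ≥ 0`. So `w` increases along every vertical line, and as it
tends to `0` at the boundary, `w ≥ 0`; finally `w < 1` because `v > 0`.
-/

open Real

section

variable {n : ℕ}

lemma isOpen_upperHalf : IsOpen (upperHalf n) :=
  isOpen_lt continuous_const (EuclideanSpace.proj (𝕜 := ℝ) (Fin.last n)).continuous

lemma ycoord_pt (x : EuclideanSpace ℝ (Fin n)) (y : ℝ) : ycoord (pt x y) = y := by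
  simp [ycoord, pt]

def xcoord (z : E n) : EuclideanSpace ℝ (Fin n) := WithLp.toLp 2 fun i => z i.castSucc

lemma pt_xcoord_ycoord (z : E n) : pt (xcoord z) (ycoord z) = z := by
  ext i
  induction i using Fin.lastCases <;> simp [pt, xcoord, ycoord]

lemma pt_eq_add_smul_eY (x : EuclideanSpace ℝ (Fin n)) (t : ℝ) : pt x t = pt x 0 + t • eY n := by
  ext i
  induction i using Fin.lastCases with
  | last => simp [pt, eY]
  | cast j => simp [pt, eY, (Fin.castSucc_lt_last j).ne]

lemma hasDerivAt_pt (x : EuclideanSpace ℝ (Fin n)) (t : ℝ) : HasDerivAt (pt x) (eY n) t := by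
  simpa [← pt_eq_add_smul_eY] using ((hasDerivAt_id t).smul_const (eY n)).const_add (pt x 0)

lemma hasFDerivAt_ycoord (z : E n) :
    HasFDerivAt ycoord (EuclideanSpace.proj (𝕜 := ℝ) (Fin.last n)) z :=
  (EuclideanSpace.proj (𝕜 := ℝ) (Fin.last n)).hasFDerivAt

lemma proj_last_eY : EuclideanSpace.proj (𝕜 := ℝ) (Fin.last n) (eY n) = 1 := by
  simp [eY]

lemma partialY_le_norm_gradient (u : E n → ℝ) (z : E n) : partialY u z ≤ ‖gradient u z‖ := by
  have hnorm : ‖gradient u z‖ = ‖fderiv ℝ u z‖ := LinearIsometryEquiv.norm_map _ _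
  calc partialY u z ≤ ‖fderiv ℝ u z‖ * ‖eY n‖ := (le_abs_self _).trans ((fderiv ℝ u z).le_opNorm _)
    _ = ‖gradient u z‖ := by simp [hnorm, eY]

lemma partialY_rpow_const {v : E n → ℝ} {z : E n} (hv : DifferentiableAt ℝ v z) (hvz : v z ≠ 0)
    (p : ℝ) : partialY (fun z => v z ^ p) z = p * v z ^ (p - 1) * partialY v z := by
  simp [partialY, (hv.hasFDerivAt.rpow_const (Or.inl hvz)).fderiv]

lemma partialY_one_sub_mul_ycoord_rpow_neg {v : E n → ℝ} {z : E n} (hv : DifferentiableAt ℝ v z)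
    (hz : z ∈ upperHalf n) (N : ℝ) :
    partialY (fun z => 1 - v z * ycoord z ^ (-N)) z =
      ycoord z ^ (-N - 1) * (N * v z - ycoord z * partialY v z) := by
  have hy : ycoord z ≠ 0 := (show 0 < ycoord z from hz).ne'
  have hw : HasFDerivAt (fun z => 1 - v z * ycoord z ^ (-N)) _ z := (hasFDerivAt_const 1 z).sub
    (hv.hasFDerivAt.mul ((hasFDerivAt_ycoord z).rpow_const (p := -N) (Or.inl hy)))
  rw [partialY, hw.fderiv]
  simp only [sub_apply, add_apply, smul_apply, zero_apply, proj_last_eY, smul_eq_mul]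
  rw [show ycoord z ^ (-N) = ycoord z ^ (-N - 1) * ycoord z by rw [← rpow_add_one hy, sub_add_cancel],
    partialY]
  ring

lemma ycoord_mul_partialY_le {v : E n → ℝ} {z : E n} {N : ℝ} (hN : 0 < N)
    (hv : DifferentiableAt ℝ v z) (hz : z ∈ upperHalf n) (hvz : 0 < v z)
    (hgrad : ycoord z * ‖gradient (fun z => v z ^ (1 / N)) z‖ ≤ v z ^ (1 / N)) :
    ycoord z * partialY v z ≤ N * v z := by
  have hρ : ycoord z * partialY (fun z => v z ^ (1 / N)) z ≤ v z ^ (1 / N) :=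
    (mul_le_mul_of_nonneg_left (partialY_le_norm_gradient _ z) (le_of_lt hz)).trans hgrad
  rw [partialY_rpow_const hv hvz.ne', rpow_sub_one hvz.ne'] at hρ
  have hP : 0 < v z ^ (1 / N) := rpow_pos_of_pos hvz _
  calc ycoord z * partialY v z
      = ycoord z * (1 / N * (v z ^ (1 / N) / v z) * partialY v z) * (N * v z / v z ^ (1 / N)) := by
        field_simp
    _ ≤ v z ^ (1 / N) * (N * v z / v z ^ (1 / N)) := by gcongr
    _ = N * v z := by field_simp

lemma monotoneOn_comp_pt {u : E n → ℝ} (hu : ∀ z ∈ upperHalf n, DifferentiableAt ℝ u z)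
    (h : ∀ z ∈ upperHalf n, 0 ≤ partialY u z) (x : EuclideanSpace ℝ (Fin n)) :
    MonotoneOn (fun t => u (pt x t)) (Ioi 0) := by
  have hmem : ∀ t ∈ Ioi (0 : ℝ), pt x t ∈ upperHalf n := fun t ht => by
    simpa [upperHalf, ycoord_pt] using ht
  have hderiv : ∀ t ∈ Ioi (0 : ℝ), HasDerivAt (fun t => u (pt x t)) (partialY u (pt x t)) t :=
    fun t ht => (hu _ (hmem t ht)).hasFDerivAt.comp_hasDerivAt t (hasDerivAt_pt x t)
  refine monotoneOn_of_hasDerivWithinAt_nonneg (f' := fun t => partialY u (pt x t)) (convex_Ioi 0)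
    (fun t ht => (hderiv t ht).continuousAt.continuousWithinAt) ?_ ?_ <;> rw [interior_Ioi]
  · exact fun t ht => (hderiv t ht).hasDerivWithinAt
  · exact fun t ht => h _ (hmem t ht)

end

lemma MonotoneOn.le_of_tendsto_nhdsGT {α β : Type*} [LinearOrder α] [TopologicalSpace α]
    [OrderTopology α] [DenselyOrdered α] [Preorder β] [TopologicalSpace β] [OrderClosedTopology β]
    {f : α → β} {a t : α} {l : β} (hf : MonotoneOn f (Ioi a))
    (hl : Tendsto f (𝓝[>] a) (𝓝 l)) (ht : a < t) : l ≤ f t :=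
  haveI := nhdsGT_neBot_of_exists_gt ⟨t, ht⟩
  le_of_tendsto hl <| by
    filter_upwards [Ioo_mem_nhdsGT ht] with r hr using hf hr.1 (mem_Ioi.2 ht) hr.2.le

theorem monotone_in_y_direction_general
    (n : ℕ) (s : ℝ) (hs2 : s < n)
    (v : E n → ℝ) (hpos : ∀ z ∈ upperHalf n, 0 < v z)
    (hC1 : ContDiffOn ℝ 1 v (upperHalf n))
    (hgrad : ∀ z ∈ upperHalf n,
      ycoord z * ‖gradient (fun z => (v z) ^ (1 / ((n : ℝ) - s))) z‖ ≤
        (v z) ^ (1 / ((n : ℝ) - s)))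
    (w : E n → ℝ) (hw : ∀ z ∈ upperHalf n, w z = 1 - v z / (ycoord z) ^ ((n : ℝ) - s))
    (hlim : ∀ x : EuclideanSpace ℝ (Fin n),
      Tendsto (fun y => w (pt x y)) (nhdsWithin 0 (Set.Ioi 0)) (nhds 0)) :
    ∀ z ∈ upperHalf n, 0 ≤ partialY w z ∧ 0 ≤ w z ∧ w z < 1 := by
  have hN : 0 < (n : ℝ) - s := sub_pos.2 hs2
  have hv : ∀ z ∈ upperHalf n, DifferentiableAt ℝ v z := fun z hz =>
    (hC1.differentiableOn one_ne_zero z hz).differentiableAt (isOpen_upperHalf.mem_nhds hz)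
  have hw' : ∀ z ∈ upperHalf n, w =ᶠ[𝓝 z] fun z => 1 - v z * ycoord z ^ (-((n : ℝ) - s)) :=
    fun z hz => eventually_of_mem (isOpen_upperHalf.mem_nhds hz) fun z' hz' => by
      dsimp only
      rw [hw z' hz', rpow_neg (le_of_lt hz'), div_eq_mul_inv]
  have hwd : ∀ z ∈ upperHalf n, DifferentiableAt ℝ w z := fun z hz =>
    ((differentiableAt_const 1).sub ((hv z hz).mul ((hasFDerivAt_ycoord z).differentiableAt.rpow_const
      (Or.inl (show 0 < ycoord z from hz).ne')))).congr_of_eventuallyEq (hw' z hz)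
  have hdw : ∀ z ∈ upperHalf n, 0 ≤ partialY w z := fun z hz => by
    rw [partialY, (hw' z hz).fderiv_eq, ← partialY, partialY_one_sub_mul_ycoord_rpow_neg (hv z hz) hz]
    exact mul_nonneg (rpow_nonneg (le_of_lt hz) _)
      (sub_nonneg.2 (ycoord_mul_partialY_le hN (hv z hz) hz (hpos z hz) (hgrad z hz)))
  intro z hz
  refine ⟨hdw z hz, ?_, ?_⟩
  · rw [← pt_xcoord_ycoord z]
    exact (monotoneOn_comp_pt hwd hdw (xcoord z)).le_of_tendsto_nhdsGT (hlim _) hz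
  · rw [hw z hz, sub_lt_self_iff]
    exact div_pos (hpos z hz) (rpow_pos_of_pos hz _)

/-- if `v > 0`, `y|∇ρ| ≤ ρ` for `ρ = v^{1/(n-s)}` with `n/2 < s < n`, and
`w = 1 - v/y^{n-s}` vanishes on the boundary, then `∂_y w ≥ 0` and `0 ≤ w < 1`. -/
theorem monotone_in_y_direction
    (n : ℕ) (hn : 1 ≤ n) (s : ℝ) (hs1 : (n : ℝ) / 2 < s) (hs2 : s < n)
    (v : E n → ℝ) (hpos : ∀ z ∈ upperHalf n, 0 < v z)
    (hC1 : ContDiffOn ℝ 1 v (upperHalf n))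
    (hgrad : ∀ z ∈ upperHalf n,
      ycoord z * ‖gradient (fun z => (v z) ^ (1 / ((n : ℝ) - s))) z‖ ≤
        (v z) ^ (1 / ((n : ℝ) - s)))
    (w : E n → ℝ) (hw : ∀ z ∈ upperHalf n, w z = 1 - v z / (ycoord z) ^ ((n : ℝ) - s))
    (hlim : ∀ x : EuclideanSpace ℝ (Fin n),
      Tendsto (fun y => w (pt x y)) (nhdsWithin 0 (Set.Ioi 0)) (nhds 0)) :
    ∀ z ∈ upperHalf n, 0 ≤ partialY w z ∧ 0 ≤ w z ∧ w z < 1 :=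
  monotone_in_y_direction_general n s hs2 v hpos hC1 hgrad w hw hlim

end
end
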